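/- The vectors of norm 6/5 in the dual lattice of A_4^∨(5) fall into exactly 30 classes modulo A_4^∨, each class containing exactly 2 such vectors: for every a ∈ A_4 with ⟨a,a⟩ = 6, the set {b ∈ A_4 : ⟨b,b⟩ = 6 and (a − b)/5 ∈ A_4^∨} has exactly 2 elements, and the image of {a ∈ A_4 : ⟨a,a⟩ = 6} in D under a ↦ a/5 + A_4^∨ has exactly 30 elements. -/

import Mathlib

open scoped BigOperators

noncomputable section

/-- The standard bilinear form `⟨x,y⟩ = ∑ xᵢ yᵢ` on `ℚ^5`. -/
def form (x y : Fin 5 → ℚ) : ℚ := ∑ i, x i * y i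

/-- The root lattice `A₄ = {a ∈ ℤ^5 : a₁ + ⋯ + a₅ = 0}` inside `ℚ^5`. -/
def A4 : AddSubgroup (Fin 5 → ℚ) where
  carrier := {a | (∀ i, ∃ n : ℤ, a i = (n : ℚ)) ∧ ∑ i, a i = 0}
  zero_mem' := ⟨fun _ => ⟨0, by simp⟩, by simp⟩
  add_mem' := by
    rintro a b ⟨ha, ha0⟩ ⟨hb, hb0⟩
    constructor
    · intro i
      obtain ⟨n, hn⟩ := ha i
      obtain ⟨m, hm⟩ := hb i
      exact ⟨n + m, by push_cast [Pi.add_apply, hn, hm]; ring⟩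
    · simp [Pi.add_apply, Finset.sum_add_distrib, ha0, hb0]
  neg_mem' := by
    rintro a ⟨ha, ha0⟩
    constructor
    · intro i
      obtain ⟨n, hn⟩ := ha i
      exact ⟨-n, by push_cast [Pi.neg_apply, hn]; ring⟩
    · simp [Pi.neg_apply, Finset.sum_neg_distrib, ha0]

/-- The fundamental weight `w₁ = (4,-1,-1,-1,-1)/5` of `A₄`. -/
def w1 : Fin 5 → ℚ := ![4/5, -1/5, -1/5, -1/5, -1/5]
/-- The fundamental weight `w₂ = (3,3,-2,-2,-2)/5` of `A₄`. -/
def w2 : Fin 5 → ℚ := ![3/5, 3/5, -2/5, -2/5, -2/5]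
/-- The fundamental weight `w₃ = (2,2,2,-3,-3)/5` of `A₄`. -/
def w3 : Fin 5 → ℚ := ![2/5, 2/5, 2/5, -3/5, -3/5]
/-- The fundamental weight `w₄ = (1,1,1,1,-4)/5` of `A₄`. -/
def w4 : Fin 5 → ℚ := ![1/5, 1/5, 1/5, 1/5, -4/5]

/-- The weight lattice `A₄^∨ = ℤw₁ + ℤw₂ + ℤw₃ + ℤw₄`.  The rescaled lattice `A₄^∨(5)`
is this group equipped with the bilinear form `5⟨·,·⟩`. -/
def A4dual : AddSubgroup (Fin 5 → ℚ) := AddSubgroup.closure {w1, w2, w3, w4}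

/-- The dual lattice `(1/5)A₄ = {a/5 : a ∈ A₄}` of `A₄^∨(5)`. -/
def fifthA4 : AddSubgroup (Fin 5 → ℚ) :=
  A4.map (DistribMulAction.toAddMonoidHom (Fin 5 → ℚ) ((5 : ℚ)⁻¹))

/-- The hyperplane `V = {x ∈ ℚ^5 : x₁ + ⋯ + x₅ = 0}`. -/
def V0 : Submodule ℚ (Fin 5 → ℚ) where
  carrier := {x | ∑ i, x i = 0}
  zero_mem' := by simp
  add_mem' := by
    intro a b ha hb
    simp only [Set.mem_setOf_eq] at *
    simp [Pi.add_apply, Finset.sum_add_distrib, ha, hb]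
  smul_mem' := by
    intro c a ha
    simp only [Set.mem_setOf_eq] at *
    simp [Pi.smul_apply, ← Finset.mul_sum, ha]

/-- The discriminant group `D = ((1/5)A₄)/A₄^∨` of the lattice `A₄^∨(5)`. -/
abbrev Disc := fifthA4 ⧸ (A4dual.addSubgroupOf fifthA4)

/-!
The norm-6 vectors of `A₄` are the sixty permutations of `±(2, -1, -1, 0, 0)`. Since
`A₄^∨ = {x ∈ V : xᵢ - x₀ ∈ ℤ}`, two vectors `a, b ∈ A₄` satisfy `a/5 ≡ b/5 (mod A₄^∨)` exactly
when the residues of `aᵢ - a₀` and `bᵢ - b₀` modulo `5` agree, i.e. when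
`b ≡ a + c(1, 1, 1, 1, 1) (mod 5)` for some `c`. A norm-6 vector has its entries in `[-2, 2]`, so
it is determined by its residues modulo `5`, and a finite computation shows that each of the
sixty vectors shares its residue pattern with exactly one other, e.g. `(2, -1, -1, 0, 0)` with
`(-2, 0, 0, 1, 1)`; hence there are thirty classes.
-/

theorem Set.ncard_image_eq_ncard_image_of_eq_iff {α β γ : Type*} {f : α → β} {g : α → γ}
    {s : Set α} (h : ∀ x ∈ s, ∀ y ∈ s, f x = f y ↔ g x = g y) :
    (f '' s).ncard = (g '' s).ncard := by
  have fst_injOn : Set.InjOn Prod.fst ((fun x => (f x, g x)) '' s) := by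
    rintro _ ⟨x, hx, rfl⟩ _ ⟨y, hy, rfl⟩ hxy
    exact Prod.ext hxy ((h x hx y hy).1 hxy)
  have snd_injOn : Set.InjOn Prod.snd ((fun x => (f x, g x)) '' s) := by
    rintro _ ⟨x, hx, rfl⟩ _ ⟨y, hy, rfl⟩ hxy
    exact Prod.ext ((h x hx y hy).2 hxy) hxy
  calc (f '' s).ncard = (Prod.fst '' ((fun x => (f x, g x)) '' s)).ncard := by
        rw [Set.image_image]
    _ = (Prod.snd '' ((fun x => (f x, g x)) '' s)).ncard := by
        rw [fst_injOn.ncard_image, snd_injOn.ncard_image]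
    _ = (g '' s).ncard := by rw [Set.image_image]

theorem mem_A4_iff {a : Fin 5 → ℚ} :
    a ∈ A4 ↔ ∃ n : Fin 5 → ℤ, ∑ i, n i = 0 ∧ Int.cast ∘ n = a := by
  constructor
  · rintro ⟨hint, hsum⟩
    choose n hn using hint
    have hna : Int.cast ∘ n = a := funext fun i => (hn i).symm
    refine ⟨n, ?_, hna⟩
    rw [← hna] at hsum
    exact_mod_cast (by simpa using hsum : ∑ i, (n i : ℚ) = 0)
  · rintro ⟨n, hsum, rfl⟩
    exact ⟨fun i => ⟨n i, rfl⟩, by simpa using congrArg (Int.cast : ℤ → ℚ) hsum⟩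

theorem form_intCast_self (n : Fin 5 → ℤ) :
    form (Int.cast ∘ n) (Int.cast ∘ n) = ((∑ i, n i ^ 2 : ℤ) : ℚ) := by
  simp [form, sq]

theorem abs_le_two_of_sum_sq_eq_six {ι : Type*} [Fintype ι] {n : ι → ℤ}
    (h : ∑ i, n i ^ 2 = 6) (i : ι) : |n i| ≤ 2 := by
  have hle : n i ^ 2 ≤ 6 :=
    h ▸ Finset.single_le_sum (fun j _ => sq_nonneg (n j)) (Finset.mem_univ i)
  nlinarith [sq_abs (n i), abs_nonneg (n i)]

def normSix : Finset (Fin 5 → ℤ) :=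
  (Finset.Icc (-2) 2).filter fun n => ∑ i, n i = 0 ∧ ∑ i, n i ^ 2 = 6

theorem mem_normSix_iff {n : Fin 5 → ℤ} :
    n ∈ normSix ↔ ∑ i, n i = 0 ∧ ∑ i, n i ^ 2 = 6 := by
  refine Finset.mem_filter.trans ⟨And.right, fun hn => ⟨?_, hn⟩⟩
  exact Finset.mem_Icc.2 ⟨fun i => (abs_le.1 (abs_le_two_of_sum_sq_eq_six hn.2 i)).1,
    fun i => (abs_le.1 (abs_le_two_of_sum_sq_eq_six hn.2 i)).2⟩

theorem sum_eq_zero_of_mem_normSix {n : Fin 5 → ℤ} (hn : n ∈ normSix) : ∑ i, n i = 0 :=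
  (mem_normSix_iff.1 hn).1

theorem setOf_mem_A4_form_eq_six :
    {a | a ∈ A4 ∧ form a a = 6} = (Int.cast ∘ ·) '' (normSix : Set (Fin 5 → ℤ)) := by
  ext a
  simp only [Set.mem_ofPred_eq, Set.mem_image, Finset.mem_coe, mem_normSix_iff, mem_A4_iff]
  constructor
  · rintro ⟨⟨n, hsum, rfl⟩, hform⟩
    rw [form_intCast_self] at hform
    exact ⟨n, ⟨hsum, by exact_mod_cast hform⟩, rfl⟩
  · rintro ⟨n, ⟨hsum, hsq⟩, rfl⟩
    exact ⟨⟨n, hsum, rfl⟩, by rw [form_intCast_self, hsq]; norm_num⟩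

theorem mem_A4dual_iff {x : Fin 5 → ℚ} :
    x ∈ A4dual ↔ ∑ i, x i = 0 ∧ ∀ i, ∃ k : ℤ, x i - x 0 = k := by
  constructor
  · intro hx
    induction hx using AddSubgroup.closure_induction with
    | mem y hy =>
      rcases hy with rfl | rfl | rfl | rfl <;>
        refine ⟨by simp [w1, w2, w3, w4, Fin.sum_univ_five]; norm_num, fun i => ?_⟩ <;>
        fin_cases i <;>
        first
          | (refine ⟨0, ?_⟩; norm_num [w1, w2, w3, w4]; done)
          | (refine ⟨-1, ?_⟩; norm_num [w1, w2, w3, w4])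
    | zero => exact ⟨by simp, fun i => ⟨0, by simp⟩⟩
    | add x y _ _ hx hy =>
      refine ⟨by simp [Finset.sum_add_distrib, hx.1, hy.1], fun i => ?_⟩
      obtain ⟨k, hk⟩ := hx.2 i
      obtain ⟨l, hl⟩ := hy.2 i
      exact ⟨k + l, by push_cast [Pi.add_apply]; linarith⟩
    | neg x _ hx =>
      refine ⟨by simp [hx.1], fun i => ?_⟩
      obtain ⟨k, hk⟩ := hx.2 i
      exact ⟨-k, by push_cast [Pi.neg_apply]; linarith⟩
  · rintro ⟨hsum, hk⟩
    obtain ⟨k₁, h₁⟩ := hk 1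
    obtain ⟨k₂, h₂⟩ := hk 2
    obtain ⟨k₃, h₃⟩ := hk 3
    obtain ⟨k₄, h₄⟩ := hk 4
    rw [Fin.sum_univ_five] at hsum
    -- the coefficient of `wⱼ` is `⟨x, eⱼ - eⱼ₊₁⟩`
    have hx : x = (-k₁) • w1 + (k₁ - k₂) • w2 + (k₂ - k₃) • w3 + (k₃ - k₄) • w4 := by
      funext i
      fin_cases i <;>
        · simp [w1, w2, w3, w4]
          linarith
    have hw : ∀ w ∈ ({w1, w2, w3, w4} : Set (Fin 5 → ℚ)), ∀ k : ℤ, k • w ∈ A4dual :=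
      fun _ hw k => zsmul_mem (AddSubgroup.subset_closure hw) k
    rw [hx]
    exact add_mem (add_mem (add_mem (hw _ (by simp) _) (hw _ (by simp) _)) (hw _ (by simp) _))
      (hw _ (by simp) _)

def diffMod5 (n : Fin 5 → ℤ) : Fin 5 → ZMod 5 := fun i => ((n i - n 0 : ℤ) : ZMod 5)

theorem exists_intCast_eq_div_iff_dvd {q : ℤ} (hq : q ≠ 0) (d : ℤ) :
    (∃ k : ℤ, (d : ℚ) / q = k) ↔ q ∣ d := by
  constructor
  · rintro ⟨k, hk⟩
    rw [div_eq_iff (by exact_mod_cast hq), mul_comm] at hk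
    exact ⟨k, by exact_mod_cast hk⟩
  · rintro ⟨k, rfl⟩
    exact ⟨k, by push_cast; field_simp⟩

theorem inv_five_smul_sub_mem_A4dual_iff {m n : Fin 5 → ℤ} (hm : ∑ i, m i = 0)
    (hn : ∑ i, n i = 0) :
    (5 : ℚ)⁻¹ • (Int.cast ∘ m - Int.cast ∘ n) ∈ A4dual ↔ diffMod5 m = diffMod5 n := by
  set x : Fin 5 → ℚ := (5 : ℚ)⁻¹ • (Int.cast ∘ m - Int.cast ∘ n) with hx
  have hdiff : ∀ i, x i - x 0 = (((m i - m 0) - (n i - n 0) : ℤ) : ℚ) / ((5 : ℤ) : ℚ) := by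
    intro i
    simp only [hx, Pi.smul_apply, Pi.sub_apply, Function.comp_apply, smul_eq_mul]
    push_cast
    ring
  have hsum : ∑ i, x i = 0 := by
    simp only [hx, Pi.smul_apply, Pi.sub_apply, Function.comp_apply, smul_eq_mul, ← Finset.mul_sum,
      Finset.sum_sub_distrib]
    exact_mod_cast (by simp [hm, hn] : (5 : ℚ)⁻¹ * ((∑ i, m i : ℤ) - ∑ i, n i) = 0)
  simp only [mem_A4dual_iff, hsum, true_and, hdiff,
    exists_intCast_eq_div_iff_dvd (by norm_num : (5 : ℤ) ≠ 0),
    funext_iff, diffMod5, ZMod.intCast_eq_intCast_iff_dvd_sub]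
  exact forall_congr' fun _ => dvd_sub_comm

theorem setOf_inv_five_smul_sub_mem_A4dual {m : Fin 5 → ℤ} (hm : m ∈ normSix) :
    {b | b ∈ A4 ∧ form b b = 6 ∧ (5 : ℚ)⁻¹ • (Int.cast ∘ m - b) ∈ A4dual} =
      (Int.cast ∘ ·) '' ↑(normSix.filter fun n => diffMod5 n = diffMod5 m) := by
  have hm0 := sum_eq_zero_of_mem_normSix hm
  ext b
  constructor
  · rintro ⟨hb, hb6, hmb⟩
    obtain ⟨n, hn, rfl⟩ : b ∈ (Int.cast ∘ ·) '' (normSix : Set (Fin 5 → ℤ)) :=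
      setOf_mem_A4_form_eq_six ▸ ⟨hb, hb6⟩
    refine ⟨n, Finset.mem_filter.2 ⟨hn, ?_⟩, rfl⟩
    exact ((inv_five_smul_sub_mem_A4dual_iff hm0 (sum_eq_zero_of_mem_normSix hn)).1 hmb).symm
  · rintro ⟨n, hn, rfl⟩
    obtain ⟨hn, hnm⟩ := Finset.mem_filter.1 hn
    obtain ⟨hb, hb6⟩ : Int.cast ∘ n ∈ {a | a ∈ A4 ∧ form a a = 6} :=
      setOf_mem_A4_form_eq_six ▸ ⟨n, hn, rfl⟩
    exact ⟨hb, hb6, (inv_five_smul_sub_mem_A4dual_iff hm0 (sum_eq_zero_of_mem_normSix hn)).2 hnm.symm⟩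

set_option maxRecDepth 100000 in
theorem card_image_diffMod5_normSix : (normSix.image diffMod5).card = 30 := by decide

set_option maxRecDepth 100000 in
theorem card_filter_diffMod5_eq_normSix :
    ∀ m ∈ normSix, (normSix.filter fun n => diffMod5 n = diffMod5 m).card = 2 := by decide

/-- The vectors of norm `6/5` in the dual lattice of `A₄^∨(5)` fall
into exactly `30` classes modulo `A₄^∨`, each class containing exactly `2` such
vectors. -/
theorem norm_six_fifths_classes :
    (∀ a : Fin 5 → ℚ, a ∈ A4 → form a a = 6 →
      Set.ncard {b : Fin 5 → ℚ | b ∈ A4 ∧ form b b = 6 ∧ (5 : ℚ)⁻¹ • (a - b) ∈ A4dual} = 2) ∧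
    Set.ncard ((fun a : Fin 5 → ℚ =>
        (QuotientAddGroup.mk ((5 : ℚ)⁻¹ • a) : (Fin 5 → ℚ) ⧸ A4dual)) ''
      {a | a ∈ A4 ∧ form a a = 6}) = 30 := by
  refine ⟨fun a ha h6 => ?_, ?_⟩
  · obtain ⟨m, hm, rfl⟩ : a ∈ (Int.cast ∘ ·) '' (normSix : Set (Fin 5 → ℤ)) :=
      setOf_mem_A4_form_eq_six ▸ ⟨ha, h6⟩
    rw [setOf_inv_five_smul_sub_mem_A4dual hm, Int.cast_injective.comp_left.injOn.ncard_image,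
      Set.ncard_coe_finset, card_filter_diffMod5_eq_normSix m hm]
  · rw [setOf_mem_A4_form_eq_six, Set.image_image,
      Set.ncard_image_eq_ncard_image_of_eq_iff (g := diffMod5), ← Finset.coe_image,
      Set.ncard_coe_finset, card_image_diffMod5_normSix]
    intro p hp q hq
    rw [QuotientAddGroup.eq_iff_sub_mem, ← smul_sub,
      inv_five_smul_sub_mem_A4dual_iff (sum_eq_zero_of_mem_normSix hp)
      (sum_eq_zero_of_mem_normSix hq)]
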